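/- Every outcome W produced by an execution of the Greedy Cohesive Rule can be completed to a priceable outcome: there exists a feasible outcome W' with W ⊆ W' such that W' is priceable. -/

import Mathlib

open Finset

section PBDefs

variable {V C : Type*} [Fintype V] [DecidableEq V] [Fintype C] [DecidableEq C]

/-- Total cost (as a real number) of a set of candidates. -/
def costOf (cost : C → ℚ) (T : Finset C) : ℝ := ∑ c ∈ T, (cost c : ℝ)

/-- Total (additive) utility of voter `i` for a set of candidates. -/
def util (u : V → C → ℝ) (i : V) (T : Finset C) : ℝ := ∑ c ∈ T, u i c

/-- A set of candidates is feasible if its total cost is within the budget of 1. -/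
def feasible (cost : C → ℚ) (W : Finset C) : Prop := costOf cost W ≤ 1

/-- The validity conditions of a PB election: positive costs, utilities in `[0,1]`,
and every candidate is assigned positive utility by some voter. -/
def validPB (cost : C → ℚ) (u : V → C → ℝ) : Prop :=
  (∀ c, 0 < cost c) ∧ (∀ i c, 0 ≤ u i c ∧ u i c ≤ 1) ∧ (∀ c, ∃ i, 0 < u i c)

/-- Extended justified representation, up to one project: for every (α,T)-cohesive
(nonempty) group `S` of voters, some voter `i ∈ S` gets utility at least `∑ c ∈ T, α c`,
or some voter `i ∈ S` would exceed this utility after adding one more candidate. -/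
def EJRupToOne (cost : C → ℚ) (u : V → C → ℝ) (W : Finset C) : Prop :=
  ∀ (α : C → ℝ) (S : Finset V) (T : Finset C),
    (∀ c, 0 ≤ α c ∧ α c ≤ 1) →
    S.Nonempty →
    costOf cost T * (Fintype.card V : ℝ) ≤ (S.card : ℝ) →
    (∀ i ∈ S, ∀ c ∈ T, α c ≤ u i c) →
    (∃ i ∈ S, (∑ c ∈ T, α c) ≤ util u i W) ∨
      (∃ i ∈ S, ∃ a : C, (∑ c ∈ T, α c) < util u i (insert a W))

/-- Extended justified representation (exact version): for every (α,T)-cohesive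
(nonempty) group `S` of voters, some voter `i ∈ S` gets utility at least `∑ c ∈ T, α c`. -/
def EJRexact (cost : C → ℚ) (u : V → C → ℝ) (W : Finset C) : Prop :=
  ∀ (α : C → ℝ) (S : Finset V) (T : Finset C),
    (∀ c, 0 ≤ α c ∧ α c ≤ 1) →
    S.Nonempty →
    costOf cost T * (Fintype.card V : ℝ) ≤ (S.card : ℝ) →
    (∀ i ∈ S, ∀ c ∈ T, α c ≤ u i c) →
    ∃ i ∈ S, (∑ c ∈ T, α c) ≤ util u i W

/-- A (nonempty) group `S` of voters is weakly (β,T)-cohesive. -/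
def weaklyCohesive (cost : C → ℚ) (u : V → C → ℝ) (β : ℝ) (S : Finset V) (T : Finset C) :
    Prop :=
  S.Nonempty ∧ costOf cost T * (Fintype.card V : ℝ) ≤ (S.card : ℝ) ∧
    ∀ i ∈ S, β ≤ util u i T

/-- Full justified representation. -/
def FJR (cost : C → ℚ) (u : V → C → ℝ) (W : Finset C) : Prop :=
  ∀ (β : ℝ) (S : Finset V) (T : Finset C),
    weaklyCohesive cost u β S T → ∃ i ∈ S, β ≤ util u i W

/-- An outcome is exhaustive if no further candidate fits within the budget. -/
def exhaustive (cost : C → ℚ) (W : Finset C) : Prop :=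
  ∀ c ∉ W, 1 < costOf cost (insert c W)

/-- The core: no nonempty group `S` of voters together with a set `T` of candidates
affordable with `S`'s share of the budget can block the outcome. -/
def inCore (cost : C → ℚ) (u : V → C → ℝ) (W : Finset C) : Prop :=
  ∀ (S : Finset V) (T : Finset C), S.Nonempty →
    costOf cost T * (Fintype.card V : ℝ) ≤ (S.card : ℝ) →
    ∃ i ∈ S, util u i T ≤ util u i W

/-- The multiplicative `a`-approximate core. -/
def inAlphaCore (cost : C → ℚ) (u : V → C → ℝ) (a : ℝ) (W : Finset C) : Prop :=
  ∀ (S : Finset V) (T : Finset C), T.Nonempty →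
    costOf cost T ≤ (S.card : ℝ) / (Fintype.card V : ℝ) →
    ∃ i ∈ S, ∃ c ∈ T, util u i T / a ≤ util u i (insert c W)

/-- The total amount paid so far by voter `i`, given per-candidate payments. -/
def totalPaid (pay : V → C → ℝ) (i : V) : ℝ := ∑ c, pay i c

/-- A candidate `c` is ρ-affordable given the payments made so far. -/
def affordable (cost : C → ℚ) (u : V → C → ℝ) (pay : V → C → ℝ) (ρ : ℝ) (c : C) : Prop :=
  ∑ i, min (1 / (Fintype.card V : ℝ) - totalPaid pay i) (u i c * ρ) = (cost c : ℝ)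

/-- One step of Rule X: add a candidate that is ρ-affordable for the minimum ρ ≥ 0,
and record the corresponding payments. -/
def RuleXStep (cost : C → ℚ) (u : V → C → ℝ) :
    (Finset C × (V → C → ℝ)) → (Finset C × (V → C → ℝ)) → Prop := fun s t =>
  ∃ c ∉ s.1, ∃ ρ : ℝ, 0 ≤ ρ ∧ affordable cost u s.2 ρ c ∧
    (∀ ρ' : ℝ, 0 ≤ ρ' → ∀ c' ∉ s.1, affordable cost u s.2 ρ' c' → ρ ≤ ρ') ∧
    t = (insert c s.1,
      fun i c' => if c' = c then
        min (1 / (Fintype.card V : ℝ) - totalPaid s.2 i) (u i c * ρ) else s.2 i c')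

/-- Rule X terminates when no remaining candidate is ρ-affordable for any ρ ≥ 0. -/
def RuleXTerminal (cost : C → ℚ) (u : V → C → ℝ) (s : Finset C × (V → C → ℝ)) : Prop :=
  ∀ ρ : ℝ, 0 ≤ ρ → ∀ c ∉ s.1, ¬ affordable cost u s.2 ρ c

/-- `W` is the output of some execution of Rule X. -/
def RuleXOutcome (cost : C → ℚ) (u : V → C → ℝ) (W : Finset C) : Prop :=
  ∃ pay : V → C → ℝ,
    Relation.ReflTransGen (RuleXStep cost u) (∅, fun _ _ => 0) (W, pay) ∧
      RuleXTerminal cost u (W, pay)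

/-- One step of the Greedy Cohesive Rule: a state consists of the current outcome,
the active voters and the active candidates.  The rule picks a weakly (β,T)-cohesive
group of active voters with β maximal, breaking ties in favor of smaller `cost T`. -/
def GCRStep (cost : C → ℚ) (u : V → C → ℝ) :
    (Finset C × Finset V × Finset C) → (Finset C × Finset V × Finset C) → Prop := fun s t =>
  ∃ (β : ℝ) (S : Finset V) (T : Finset C),
    0 < β ∧ S ⊆ s.2.1 ∧ T ⊆ s.2.2 ∧ weaklyCohesive cost u β S T ∧
    (∀ (β' : ℝ) (S' : Finset V) (T' : Finset C), 0 < β' → S' ⊆ s.2.1 → T' ⊆ s.2.2 →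
      weaklyCohesive cost u β' S' T' → β' ≤ β) ∧
    (∀ (S' : Finset V) (T' : Finset C), S' ⊆ s.2.1 → T' ⊆ s.2.2 →
      weaklyCohesive cost u β S' T' → costOf cost T ≤ costOf cost T') ∧
    t = (s.1 ∪ T, s.2.1 \ S, s.2.2 \ T)

/-- GCR terminates when no weakly cohesive group of active voters remains. -/
def GCRTerminal (cost : C → ℚ) (u : V → C → ℝ) (s : Finset C × Finset V × Finset C) : Prop :=
  ∀ (β : ℝ) (S : Finset V) (T : Finset C), 0 < β → S ⊆ s.2.1 → T ⊆ s.2.2 →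
    ¬ weaklyCohesive cost u β S T

/-- `W` is the output of some execution of the Greedy Cohesive Rule. -/
def GCROutcome (cost : C → ℚ) (u : V → C → ℝ) (W : Finset C) : Prop :=
  ∃ (AV : Finset V) (AC : Finset C),
    Relation.ReflTransGen (GCRStep cost u) (∅, Finset.univ, Finset.univ) (W, AV, AC) ∧
      GCRTerminal cost u (W, AV, AC)

/-- A price system `(b, p)` (with nonnegative payments) supports the outcome `W`:
conditions (C1)-(C5). -/
def supports (cost : C → ℚ) (u : V → C → ℝ) (b : ℝ) (p : V → C → ℝ) (W : Finset C) : Prop :=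
  1 ≤ b ∧ (∀ i c, 0 ≤ p i c) ∧
  (∀ i c, u i c = 0 → p i c = 0) ∧
  (∀ i, ∑ c, p i c ≤ b / (Fintype.card V : ℝ)) ∧
  (∀ c ∈ W, ∑ i, p i c = (cost c : ℝ)) ∧
  (∀ c ∉ W, ∑ i, p i c = 0) ∧
  (∀ c ∉ W, ∑ i ∈ Finset.univ.filter (fun i => 0 < u i c),
    (b / (Fintype.card V : ℝ) - ∑ c' ∈ W, p i c') ≤ (cost c : ℝ))

/-- An outcome is priceable if some price system supports it. -/
def priceable (cost : C → ℚ) (u : V → C → ℝ) (W : Finset C) : Prop :=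
  ∃ (b : ℝ) (p : V → C → ℝ), supports cost u b p W

/-- EJR for approval-based elections: every `T`-cohesive group contains a voter
with at least `|T|` approved candidates in `W`. -/
def approvalEJR (cost : C → ℚ) (A : V → Finset C) (W : Finset C) : Prop :=
  ∀ (S : Finset V) (T : Finset C), S.Nonempty →
    costOf cost T * (Fintype.card V : ℝ) ≤ (S.card : ℝ) →
    (∀ i ∈ S, T ⊆ A i) →
    ∃ i ∈ S, T.card ≤ (A i ∩ W).card

/-- The `t`-th harmonic number. -/
noncomputable def harm (t : ℕ) : ℝ := ∑ j ∈ Finset.range t, (1 : ℝ) / (j + 1)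

/-- The PAV score of an outcome. -/
noncomputable def PAVscore (A : V → Finset C) (W : Finset C) : ℝ := ∑ i, harm ((A i ∩ W).card)

end PBDefs

/-!
Along a run of the Greedy Cohesive Rule we maintain payments in which every voter spends at most
`1/n` and only deactivated voters have spent anything. When the rule selects `(β, S, T)`, the
tie-breaking in favour of cheaper `T` gives Hall's condition: every `T' ⊆ T` is liked by at least
`cost(T') · n` voters of `S`. Since costs are rational, Hall's theorem applied to suitably many
copies of candidates and voters lets the untouched budgets of `S` pay exactly for `T`. Afterwards,
as long as some candidate costs less than the money its supporters have left, add it and split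
its cost among them in proportion to their leftovers. When this stops, condition (C5) holds with
`b = 1`, and since the payments cover all costs, the outcome is feasible.
-/

theorem exists_capacitated_assignment {α β : Type*} [Fintype α] [DecidableEq α]
    [Fintype β] [DecidableEq β] (r : α → Finset β) (D : α → ℕ) (k : ℕ)
    (hall : ∀ A : Finset α, ∑ a ∈ A, D a ≤ k * #(A.biUnion r)) :
    ∃ m : α → β → ℕ, (∀ a b, m a b ≠ 0 → b ∈ r a) ∧ (∀ a, ∑ b, m a b = D a) ∧
      (∀ b, ∑ a, m a b ≤ k) := by
  -- Hall's theorem for `D a` copies of each `a` and `k` copies of each `b`.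
  let t : (Σ a, Fin (D a)) → Finset (β × Fin k) := fun x => r x.1 ×ˢ univ
  have hall' : ∀ s, #s ≤ #(s.biUnion t) := by
    intro s
    have hfiber : ∀ a, #{x ∈ s | x.1 = a} ≤ D a := fun a =>
      calc #{x ∈ s | x.1 = a}
          ≤ #(univ.map (Function.Embedding.sigmaMk (β := fun a => Fin (D a)) a)) :=
            card_le_card fun x hx => by
              obtain ⟨a', j⟩ := x
              obtain rfl : a' = a := (mem_filter.mp hx).2
              simp
        _ = D a := by simp
    have hbiUnion : s.biUnion t = (s.image Sigma.fst).biUnion r ×ˢ univ := by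
      ext ⟨b, j⟩; simp [t]
    calc #s = ∑ a ∈ s.image Sigma.fst, #{x ∈ s | x.1 = a} :=
          card_eq_sum_card_fiberwise fun x hx => mem_image_of_mem _ hx
      _ ≤ ∑ a ∈ s.image Sigma.fst, D a := sum_le_sum fun a _ => hfiber a
      _ ≤ k * #((s.image Sigma.fst).biUnion r) := hall _
      _ = #(s.biUnion t) := by rw [hbiUnion, card_product, card_univ, Fintype.card_fin, mul_comm]
  obtain ⟨f, hf_inj, hf_mem⟩ := (all_card_le_biUnion_card_iff_exists_injective t).mp hall'
  refine ⟨fun a b => #{j : Fin (D a) | (f ⟨a, j⟩).1 = b}, ?_, ?_, ?_⟩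
  · intro a b h
    obtain ⟨j, hj⟩ := card_ne_zero.mp h
    rw [(mem_filter.mp hj).2.symm]
    exact (mem_product.mp (hf_mem ⟨a, j⟩)).1
  · intro a
    rw [← card_eq_sum_card_fiberwise fun _ _ => mem_univ _, card_univ, Fintype.card_fin]
  · intro b
    calc ∑ a, #{j : Fin (D a) | (f ⟨a, j⟩).1 = b} = #{x : Σ a, Fin (D a) | (f x).1 = b} := by
          simp only [card_filter]
          rw [← univ_sigma_univ, sum_sigma]
      _ ≤ #(univ : Finset (Fin k)) :=
          card_le_card_of_injOn (fun x => (f x).2) (fun _ _ => mem_coe.mpr (mem_univ _))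
            fun x hx y hy hxy => hf_inj <|
              Prod.ext ((mem_filter.mp hx).2.trans (mem_filter.mp hy).2.symm) hxy
      _ = k := by simp

theorem exists_common_denominator {α : Type*} [Fintype α] (w : α → ℚ) (hw : ∀ a, 0 ≤ w a) :
    ∃ d : ℕ, 0 < d ∧ ∀ a, ∃ N : ℕ, (N : ℚ) = w a * d := by
  refine ⟨∏ a, (w a).den, prod_pos fun a _ => (w a).den_pos, fun a => ?_⟩
  obtain ⟨e, he⟩ := dvd_prod_of_mem (fun a => (w a).den) (mem_univ a)
  refine ⟨(w a).num.toNat * e, ?_⟩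
  have hnum : ((w a).num.toNat : ℚ) = (w a).num := by
    exact_mod_cast Int.toNat_of_nonneg (Rat.num_nonneg.mpr (hw a))
  rw [he]
  push_cast
  rw [hnum, ← mul_assoc, Rat.mul_den_eq_num]

theorem exists_fractional_assignment {α β : Type*} [Fintype α] [DecidableEq α]
    [Fintype β] [DecidableEq β] (r : α → Finset β) (w : α → ℚ) (hw : ∀ a, 0 ≤ w a)
    {n : ℕ} (hn : 0 < n) (hall : ∀ A : Finset α, (∑ a ∈ A, w a) * n ≤ #(A.biUnion r)) :
    ∃ q : α → β → ℝ, (∀ a b, 0 ≤ q a b) ∧ (∀ a b, q a b ≠ 0 → b ∈ r a) ∧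
      (∀ a, ∑ b, q a b = w a) ∧ (∀ b, ∑ a, q a b ≤ 1 / n) := by
  obtain ⟨d, hd, hN⟩ := exists_common_denominator w hw
  choose N hN using hN
  obtain ⟨m, hm_mem, hm_row, hm_col⟩ := exists_capacitated_assignment r (fun a => N a * n) d
    fun A => by
      have : ((∑ a ∈ A, N a * n : ℕ) : ℚ) ≤ (d * #(A.biUnion r) : ℕ) := by
        push_cast
        simp_rw [hN, ← sum_mul]
        nlinarith [hall A, (Nat.cast_pos (α := ℚ)).mpr hd]
      exact_mod_cast this
  have hnd : (0 : ℝ) < n * d := by positivity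
  refine ⟨fun a b => m a b / (n * d), fun a b => by positivity,
    fun a b h => hm_mem a b fun h0 => h (by simp [h0]), fun a => ?_, fun b => ?_⟩
  · rw [← sum_div, ← Nat.cast_sum, hm_row, div_eq_iff hnd.ne']
    push_cast
    rw [← Rat.cast_natCast, hN]
    push_cast
    ring
  · rw [← sum_div, ← Nat.cast_sum, div_le_div_iff₀ hnd (by positivity)]
    have : ((∑ a, m a b : ℕ) : ℝ) ≤ d := by exact_mod_cast hm_col b
    nlinarith

section Cost

variable {V C : Type*} {cost : C → ℚ} {u : V → C → ℝ}

lemma costOf_nonneg (hcost : ∀ c, 0 ≤ cost c) (T : Finset C) : 0 ≤ costOf cost T :=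
  sum_nonneg fun c _ => by exact_mod_cast hcost c

lemma costOf_pos (hcost : ∀ c, 0 < cost c) {T : Finset C} (hT : T.Nonempty) :
    0 < costOf cost T :=
  sum_pos (fun c _ => by exact_mod_cast hcost c) hT

lemma costOf_sdiff [DecidableEq C] {T' T : Finset C} (h : T' ⊆ T) :
    costOf cost (T \ T') = costOf cost T - costOf cost T' :=
  eq_sub_of_add_eq (sum_sdiff h)

lemma util_sdiff [DecidableEq C] {i : V} {T' T : Finset C} (h : T' ⊆ T) :
    util u i (T \ T') = util u i T - util u i T' :=
  eq_sub_of_add_eq (sum_sdiff h)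

theorem costOf_mul_card_le_card_supporters [Fintype V] [DecidableEq V] [DecidableEq C]
    (hcost : ∀ c, 0 < cost c) {β : ℝ} {S : Finset V} {T : Finset C}
    (hcoh : weaklyCohesive cost u β S T)
    (hmin : ∀ S' T', S' ⊆ S → T' ⊆ T → weaklyCohesive cost u β S' T' →
      costOf cost T ≤ costOf cost T')
    {T' : Finset C} (hT' : T' ⊆ T) :
    costOf cost T' * Fintype.card V ≤ #(T'.biUnion fun c => {i ∈ S | 0 < u i c}) := by
  obtain ⟨-, hcard, hutil⟩ := hcoh
  set N := T'.biUnion fun c => {i ∈ S | 0 < u i c}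
  by_contra! hlt
  have hNS : N ⊆ S := biUnion_subset.mpr fun c _ => filter_subset _ _
  have hT'_ne : T'.Nonempty := by
    rw [nonempty_iff_ne_empty]
    rintro rfl
    simp [costOf, N] at hlt
  have hcost_lt : costOf cost (T \ T') * Fintype.card V < #(S \ N) := by
    rw [costOf_sdiff hT', card_sdiff_of_subset hNS, Nat.cast_sub (card_le_card hNS)]
    nlinarith
  -- the voters of `S` indifferent to `T'` are weakly `β`-cohesive on the cheaper set `T \ T'`
  have hcoh' : weaklyCohesive cost u β (S \ N) (T \ T') := by
    refine ⟨card_pos.mp ?_, hcost_lt.le, fun i hi => ?_⟩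
    · have := costOf_nonneg (fun c => (hcost c).le) (T \ T')
      exact_mod_cast (by positivity : (0 : ℝ) ≤ _).trans_lt hcost_lt
    · obtain ⟨hiS, hiN⟩ := mem_sdiff.mp hi
      have hT'_util : util u i T' ≤ 0 := sum_nonpos fun c hc => not_lt.mp fun h =>
        hiN (mem_biUnion.mpr ⟨c, hc, mem_filter.mpr ⟨hiS, h⟩⟩)
      rw [util_sdiff hT']
      linarith [hutil i hiS]
  have := hmin _ _ sdiff_subset sdiff_subset hcoh'
  rw [costOf_sdiff hT'] at this
  linarith [costOf_pos hcost hT'_ne]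

end Cost

section Payments

variable {V C : Type*} [Fintype V] [Fintype C] {cost : C → ℚ} {u : V → C → ℝ}

/-- A price system with budget `b = 1` supporting `W`, except possibly for condition (C5). -/
structure PaysFor (cost : C → ℚ) (u : V → C → ℝ) (p : V → C → ℝ) (W : Finset C) : Prop where
  nonneg : ∀ i c, 0 ≤ p i c
  pos_of_ne_zero : ∀ i c, p i c ≠ 0 → 0 < u i c
  sum_le : ∀ i, ∑ c, p i c ≤ 1 / Fintype.card V
  sum_eq_cost : ∀ c ∈ W, ∑ i, p i c = cost c
  eq_zero_of_notMem : ∀ c ∉ W, ∀ i, p i c = 0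

namespace PaysFor

variable {p q : V → C → ℝ} {W T : Finset C}

theorem zero : PaysFor cost u 0 ∅ where
  nonneg _ _ := le_rfl
  pos_of_ne_zero _ _ h := absurd rfl h
  sum_le _ := by simp
  sum_eq_cost _ h := absurd h (notMem_empty _)
  eq_zero_of_notMem _ _ _ := rfl

theorem add [DecidableEq C] (hp : PaysFor cost u p W) (hq : PaysFor cost u q T)
    (hWT : Disjoint W T)
    (hrows : ∀ i, (∀ c, p i c = 0) ∨ ∀ c, q i c = 0) : PaysFor cost u (p + q) (W ∪ T) where
  nonneg i c := add_nonneg (hp.nonneg i c) (hq.nonneg i c)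
  pos_of_ne_zero i c h := by
    by_cases hpic : p i c = 0
    · exact hq.pos_of_ne_zero i c (by simpa [hpic] using h)
    · exact hp.pos_of_ne_zero i c hpic
  sum_le i := by
    rcases hrows i with h | h
    · simpa [h] using hq.sum_le i
    · simpa [h] using hp.sum_le i
  sum_eq_cost c hc := by
    rcases mem_union.mp hc with hcW | hcT
    · simp [hq.eq_zero_of_notMem c (disjoint_left.mp hWT hcW), hp.sum_eq_cost c hcW]
    · simp [hp.eq_zero_of_notMem c (disjoint_right.mp hWT hcT), hq.sum_eq_cost c hcT]
  eq_zero_of_notMem c hc i := by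
    rw [mem_union, not_or] at hc
    simp [hp.eq_zero_of_notMem c hc.1, hq.eq_zero_of_notMem c hc.2]

theorem sum_mem_eq (hp : PaysFor cost u p W) (i : V) : ∑ c ∈ W, p i c = ∑ c, p i c :=
  sum_subset (subset_univ W) fun c _ hc => hp.eq_zero_of_notMem c hc i

theorem feasible (hp : PaysFor cost u p W) : feasible cost W :=
  calc costOf cost W = ∑ c ∈ W, ∑ i, p i c := sum_congr rfl fun c hc => (hp.sum_eq_cost c hc).symm
    _ = ∑ i, ∑ c ∈ W, p i c := sum_comm
    _ ≤ ∑ _i : V, 1 / (Fintype.card V : ℝ) :=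
      sum_le_sum fun i _ => (hp.sum_mem_eq i).trans_le (hp.sum_le i)
    _ ≤ 1 := by rw [sum_const, card_univ, nsmul_eq_mul, mul_one_div]; exact div_self_le_one _

theorem supports (hp : PaysFor cost u p W)
    (hleft : ∀ c ∉ W, ∑ i ∈ univ.filter (fun i => 0 < u i c),
      (1 / (Fintype.card V : ℝ) - ∑ c' ∈ W, p i c') ≤ cost c) :
    supports cost u 1 p W :=
  ⟨le_rfl, hp.nonneg, fun i c h => by_contra fun hne => (hp.pos_of_ne_zero i c hne).ne' h,
    hp.sum_le, hp.sum_eq_cost, fun c hc => sum_eq_zero fun i _ => hp.eq_zero_of_notMem c hc i,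
    hleft⟩

/-- The cost of `c₀` is split among its supporters in proportion to the money they have left. -/
theorem exists_insert [DecidableEq C] (hp : PaysFor cost u p W) {c₀ : C} (hc₀ : c₀ ∉ W)
    (hcost : 0 ≤ cost c₀)
    (hleft : (cost c₀ : ℝ) < ∑ i ∈ univ.filter (fun i => 0 < u i c₀),
      (1 / (Fintype.card V : ℝ) - ∑ c ∈ W, p i c)) :
    ∃ p', PaysFor cost u p' (insert c₀ W) := by
  set ℓ : V → ℝ := fun i => 1 / (Fintype.card V : ℝ) - ∑ c ∈ W, p i c
  set L := ∑ i ∈ univ.filter (fun i => 0 < u i c₀), ℓ i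
  have hℓ : ∀ i, 0 ≤ ℓ i := fun i => sub_nonneg.mpr ((hp.sum_mem_eq i).trans_le (hp.sum_le i))
  have hL : 0 < L := lt_of_le_of_lt (by exact_mod_cast hcost) hleft
  have hθ : 0 ≤ (cost c₀ : ℝ) / L := div_nonneg (by exact_mod_cast hcost) hL.le
  have hθ1 : (cost c₀ : ℝ) / L ≤ 1 := (div_le_one hL).mpr hleft.le
  set x : V → ℝ := fun i => if 0 < u i c₀ then cost c₀ / L * ℓ i else 0
  have hx : ∀ i, 0 ≤ x i := fun i => by
    simp only [x]; split_ifs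
    exacts [mul_nonneg hθ (hℓ i), le_rfl]
  have hxℓ : ∀ i, x i ≤ ℓ i := fun i => by
    simp only [x]; split_ifs
    · exact mul_le_of_le_one_left (hℓ i) hθ1
    · exact hℓ i
  refine ⟨fun i c => p i c + if c = c₀ then x i else 0, ?_, ?_, ?_, ?_, ?_⟩
  · intro i c
    have := hx i
    have := hp.nonneg i c
    split_ifs <;> linarith
  · intro i c h
    by_cases hpic : p i c = 0
    · rw [hpic, zero_add] at h
      split_ifs at h with hc
      · subst hc
        by_contra hu
        exact h (if_neg hu)
      · exact absurd rfl h
    · exact hp.pos_of_ne_zero i c hpic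
  · intro i
    rw [sum_add_distrib, sum_ite_eq' univ c₀, if_pos (mem_univ _), ← hp.sum_mem_eq i]
    linarith [hxℓ i]
  · intro c hc
    rcases mem_insert.mp hc with rfl | hcW
    · simp only [if_true, hp.eq_zero_of_notMem c hc₀, zero_add, x]
      rw [← sum_filter, ← mul_sum]
      exact div_mul_cancel₀ _ hL.ne'
    · have hne : c ≠ c₀ := fun h => hc₀ (h ▸ hcW)
      simp only [if_neg hne, add_zero]
      exact hp.sum_eq_cost c hcW
  · intro c hc i
    rw [mem_insert, not_or] at hc
    simp only [if_neg hc.1, add_zero]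
    exact hp.eq_zero_of_notMem c hc.2 i

/-- Among the supersets of `W` that can be paid for, one of maximal size satisfies (C5). -/
theorem exists_superset_supports (hcost : ∀ c, 0 ≤ cost c) (hp : PaysFor cost u p W) :
    ∃ W', W ⊆ W' ∧ ∃ p', PaysFor cost u p' W' ∧ _root_.supports cost u 1 p' W' := by
  classical
  obtain ⟨W', hW', hmax⟩ := exists_max_image
    (univ.filter fun W' => W ⊆ W' ∧ ∃ p', PaysFor cost u p' W') card
    ⟨W, mem_filter.mpr ⟨mem_univ _, subset_rfl, p, hp⟩⟩
  obtain ⟨hWW', p', hp'⟩ := (mem_filter.mp hW').2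
  refine ⟨W', hWW', p', hp', hp'.supports fun c hc => not_lt.mp fun hlt => ?_⟩
  obtain ⟨p'', hp''⟩ := hp'.exists_insert hc (hcost c) hlt
  have := hmax (insert c W') (mem_filter.mpr
    ⟨mem_univ _, hWW'.trans (subset_insert _ _), p'', hp''⟩)
  rw [card_insert_of_notMem hc] at this
  omega

end PaysFor

end Payments

section GCR

variable {V C : Type*} [Fintype V] [DecidableEq V] [Fintype C] [DecidableEq C]
  {cost : C → ℚ} {u : V → C → ℝ}

theorem exists_paysFor_of_cheapest_cohesive (hcost : ∀ c, 0 < cost c) {β : ℝ} {S : Finset V}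
    {T : Finset C} (hcoh : weaklyCohesive cost u β S T)
    (hmin : ∀ S' T', S' ⊆ S → T' ⊆ T → weaklyCohesive cost u β S' T' →
      costOf cost T ≤ costOf cost T') :
    ∃ q, PaysFor cost u q T ∧ ∀ i ∉ S, ∀ c, q i c = 0 := by
  obtain ⟨i₀, -⟩ := hcoh.1
  obtain ⟨q, hq_nonneg, hq_mem, hq_col, hq_row⟩ := exists_fractional_assignment
    (fun c => {i ∈ S | 0 < u i c}) (fun c => if c ∈ T then cost c else 0)
    (fun c => by split_ifs; exacts [(hcost c).le, le_rfl]) (Fintype.card_pos_iff.mpr ⟨i₀⟩)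
    fun A => by
      have h := costOf_mul_card_le_card_supporters hcost hcoh hmin
        (inter_subset_right : A ∩ T ⊆ T)
      have hsub := card_le_card (biUnion_subset_biUnion_of_subset_left
        (fun c => {i ∈ S | 0 < u i c}) (inter_subset_left : A ∩ T ⊆ A))
      rw [sum_ite_mem]
      unfold costOf at h
      exact_mod_cast h.trans (Nat.cast_le.mpr hsub)
  have hq_T : ∀ c ∉ T, ∀ i, q c i = 0 := fun c hc i =>
    (sum_eq_zero_iff_of_nonneg fun i _ => hq_nonneg c i).mp (by simpa [hc] using hq_col c) i
      (mem_univ i)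
  refine ⟨fun i c => q c i, ⟨fun i c => hq_nonneg c i,
      fun i c h => (mem_filter.mp (hq_mem c i h)).2, hq_row,
      fun c hc => by simpa [hc] using hq_col c, hq_T⟩,
    fun i hi c => by_contra fun h => hi (mem_filter.mp (hq_mem c i h)).1⟩

theorem exists_paysFor_of_GCR_run (hcost : ∀ c, 0 < cost c) {s : Finset C × Finset V × Finset C}
    (h : Relation.ReflTransGen (GCRStep cost u) (∅, univ, univ) s) :
    s.2.2 = univ \ s.1 ∧ ∃ p, PaysFor cost u p s.1 ∧ ∀ i ∈ s.2.1, ∀ c, p i c = 0 := by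
  induction h with
  | refl => exact ⟨by simp, 0, PaysFor.zero, fun _ _ _ => rfl⟩
  | tail _ hstep ih =>
    obtain ⟨hAC, p, hp, hp_active⟩ := ih
    obtain ⟨β, S, T, -, hS, hT, hcoh, -, hmin, rfl⟩ := hstep
    obtain ⟨q, hq, hq_S⟩ := exists_paysFor_of_cheapest_cohesive hcost hcoh
      fun S' T' hS' hT' => hmin S' T' (hS'.trans hS) (hT'.trans hT)
    refine ⟨by rw [hAC, sdiff_sdiff_left]; rfl, p + q, hp.add hq ?_ ?_, fun i hi c => ?_⟩
    · exact disjoint_of_subset_right (hT.trans hAC.le) disjoint_sdiff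
    · intro i
      by_cases hi : i ∈ S
      · exact .inl (hp_active i (hS hi))
      · exact .inr (hq_S i hi)
    · obtain ⟨hi_active, hiS⟩ := mem_sdiff.mp hi
      simp [hp_active i hi_active c, hq_S i hiS c]

end GCR

/-- Every outcome of the Greedy Cohesive Rule can be completed to a
priceable feasible outcome. -/
theorem GCR_completable_to_priceable
    {V C : Type*} [Fintype V] [DecidableEq V] [Fintype C] [DecidableEq C]
    (cost : C → ℚ) (u : V → C → ℝ) (hvalid : validPB cost u)
    (W : Finset C) (hW : GCROutcome cost u W) :
    ∃ W' : Finset C, feasible cost W' ∧ W ⊆ W' ∧ priceable cost u W' := by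
  obtain ⟨AV, AC, hrun, -⟩ := hW
  obtain ⟨-, p, hp, -⟩ := exists_paysFor_of_GCR_run hvalid.1 hrun
  obtain ⟨W', hWW', p', hp', hsupp⟩ := hp.exists_superset_supports fun c => (hvalid.1 c).le
  exact ⟨W', hp'.feasible, hWW', 1, p', hsupp⟩
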